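/- Each monomial of the determinant of a matrix whose (a,b)-entry is x_{a,b} (an indeterminate) corresponds bijectively to a permutation; specializing to certain entries being 0, 1, or ∗ as in the matrix M of the canonical Weierstrass section, the restriction of the lower-left (n−s)×(n−s) minor to e+V is a polynomial in the ∗-coordinates, and if exactly one complete disjoint union of composite lines exists, this restriction is (up to sign) a single monomial equal to a coordinate function. -/

import Mathlib

open Equiv

/-- Every other term of the Leibniz expansion contains a zero entry. -/
theorem Matrix.det_eq_sign_smul_prod_of_forall_ne_zero_imp_eq {n R : Type*} [DecidableEq n]
    [Fintype n] [CommRing R] (A : Matrix n n R) (σ : Perm n)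
    (huniq : ∀ τ : Perm n, (∀ i, A i (τ i) ≠ 0) → τ = σ) :
    A.det = (Perm.sign σ : ℤ) • ∏ i, A i (σ i) := by
  rw [← det_transpose, det_apply, Finset.sum_eq_single σ]
  · simp only [transpose_apply, Units.smul_def]
  · intro τ _ hτσ
    obtain ⟨i, hi⟩ : ∃ i, A i (τ i) = 0 := by
      by_contra! h
      exact hτσ (huniq τ h)
    rw [Finset.prod_eq_zero (Finset.mem_univ i) hi, smul_zero]
  · exact fun h => absurd (Finset.mem_univ σ) h

theorem stmt_15_general (m : ℕ) (σv : Type*)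
    (A : Matrix (Fin m) (Fin m) (MvPolynomial σv ℂ))
    (σ : Equiv.Perm (Fin m))
    (huniq : ∀ τ : Equiv.Perm (Fin m), (∀ i, A i (τ i) ≠ 0) → τ = σ) :
    A.det = (Equiv.Perm.sign σ : ℤ) • ∏ i, A i (σ i) :=
  A.det_eq_sign_smul_prod_of_forall_ne_zero_imp_eq σ huniq

/-- Each monomial of a determinant corresponds to a permutation. If `A` is a square
matrix over a multivariate polynomial ring whose entries are each `0`, `1`, or a
variable, and exactly one permutation `σ` has all its entries `A i (σ i)` nonzero,
then `det A = ± ∏ i, A i (σ i)`, a single monomial (possibly the empty product). -/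
theorem stmt_15 (m : ℕ) (σv : Type*)
    (A : Matrix (Fin m) (Fin m) (MvPolynomial σv ℂ))
    (hentries : ∀ i j, A i j = 0 ∨ A i j = 1 ∨ ∃ v, A i j = MvPolynomial.X v)
    (σ : Equiv.Perm (Fin m))
    (hσ : ∀ i, A i (σ i) ≠ 0)
    (huniq : ∀ τ : Equiv.Perm (Fin m), (∀ i, A i (τ i) ≠ 0) → τ = σ) :
    A.det = (Equiv.Perm.sign σ : ℤ) • ∏ i, A i (σ i) :=
  stmt_15_general m σv A σ huniq
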